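/- For positive integers a2, a3, the number of integer triples (x1, x2, x3) in the cube [-N, N]^3 satisfying x1 = a2·x2^2 - a3·x3^2 is O(N^{3/2}), i.e. there exists a constant C (depending on a2, a3) such that the count is at most C·N^{3/2} for all N ≥ 1. -/

import Mathlib

open Finset

lemma card_le_of_forall_sub_le (T : Finset ℤ) {r : ℝ} (hr : 0 ≤ r)
    (h : ∀ x ∈ T, ∀ y ∈ T, ((y - x : ℤ) : ℝ) ≤ r) : (#T : ℝ) ≤ r + 1 := by
  rcases T.eq_empty_or_nonempty with rfl | hT
  · simp only [card_empty, Nat.cast_zero]; linarith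
  have hsub : T ⊆ Icc (T.min' hT) (T.max' hT) := fun x hx =>
    mem_Icc.2 ⟨T.min'_le x hx, T.le_max' x hx⟩
  have hcard : (#T : ℤ) ≤ T.max' hT + 1 - T.min' hT := by
    have := card_le_card hsub
    have := T.min'_le_max' hT
    rw [Int.card_Icc] at *
    omega
  have hdiam := h _ (T.min'_mem hT) _ (T.max'_mem hT)
  have hcard' : ((#T : ℤ) : ℝ) ≤ ((T.max' hT + 1 - T.min' hT : ℤ) : ℝ) := by
    exact_mod_cast hcard
  push_cast at hcard' hdiam
  linarith

/-- The absolute values of the solutions lie within `√(hi - lo)` of each other, since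
`(y - x)² ≤ y² - x² ≤ a (y² - x²)` for `0 ≤ x ≤ y`. -/
lemma card_filter_mul_sq_mem_Icc_le {a : ℤ} (ha : 0 < a) (s : Finset ℤ) (lo hi : ℤ) :
    (#(s.filter fun x => a * x ^ 2 ∈ Icc lo hi) : ℝ) ≤ 2 * √(hi - lo : ℝ) + 2 := by
  set S := s.filter fun x => a * x ^ 2 ∈ Icc lo hi
  set T := S.image abs
  have hT : (#T : ℝ) ≤ √(hi - lo : ℝ) + 1 := by
    refine card_le_of_forall_sub_le T (Real.sqrt_nonneg _) ?_
    simp only [T, S, forall_mem_image, mem_filter, mem_Icc]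
    intro x' hx y' hy
    set x := |x'|
    set y := |y'|
    rcases le_or_gt x y with hxy | hxy
    · have hx0 : 0 ≤ x := abs_nonneg x'
      have hxlo : lo ≤ a * x ^ 2 := by rw [sq_abs]; exact hx.2.1
      have hyhi : a * y ^ 2 ≤ hi := by rw [sq_abs]; exact hy.2.2
      have hsq : (y - x) ^ 2 ≤ hi - lo := by
        have hdiff : 0 ≤ y ^ 2 - x ^ 2 := by nlinarith
        nlinarith [mul_le_mul_of_nonneg_right (show 1 ≤ a by omega) hdiff]
      calc ((y - x : ℤ) : ℝ) ≤ |((y - x : ℤ) : ℝ)| := le_abs_self _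
        _ ≤ √(hi - lo : ℝ) := Real.abs_le_sqrt (by exact_mod_cast hsq)
    · calc ((y - x : ℤ) : ℝ) ≤ 0 := by exact_mod_cast (by omega : y - x ≤ 0)
        _ ≤ √(hi - lo : ℝ) := Real.sqrt_nonneg _
  have hST : S ⊆ T ∪ T.image Neg.neg := by
    intro x hx
    rcases abs_choice x with h | h
    · exact mem_union_left _ (mem_image.2 ⟨x, hx, h⟩)
    · exact mem_union_right _ (mem_image.2 ⟨|x|, mem_image_of_mem _ hx, by rw [h, neg_neg]⟩)
  have hS : #S ≤ 2 * #T := by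
    have := (card_le_card hST).trans (card_union_le _ _)
    have := card_image_le (s := T) (f := Neg.neg)
    omega
  have hS' : (#S : ℝ) ≤ 2 * #T := by exact_mod_cast hS
  linarith

/-- Once `x₂` is fixed, `x₁` is determined by `x₃`, and `a₃ x₃²` lies within `N` of `a₂ x₂²`. -/
lemma card_paraboloid_le (a2 a3 : ℤ) (ha3 : 0 < a3) (N : ℕ) :
    (#((Icc (-(N:ℤ)) N ×ˢ Icc (-(N:ℤ)) N ×ˢ Icc (-(N:ℤ)) N).filter
        fun p : ℤ × ℤ × ℤ => p.1 = a2 * p.2.1 ^ 2 - a3 * p.2.2 ^ 2) : ℝ) ≤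
      (2 * N + 1) * (2 * √(2 * N) + 2) := by
  set I := Icc (-(N:ℤ)) N
  set fiber := fun x2 : ℤ => I.filter fun x3 => a3 * x3 ^ 2 ∈ Icc (a2 * x2 ^ 2 - N) (a2 * x2 ^ 2 + N)
  have hsub : ((I ×ˢ I ×ˢ I).filter
        fun p : ℤ × ℤ × ℤ => p.1 = a2 * p.2.1 ^ 2 - a3 * p.2.2 ^ 2) ⊆
      I.biUnion fun x2 => (fiber x2).image fun x3 => (a2 * x2 ^ 2 - a3 * x3 ^ 2, x2, x3) := by
    rintro ⟨x1, x2, x3⟩ hp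
    simp only [I, mem_filter, mem_product, mem_Icc] at hp
    simp only [I, fiber, mem_biUnion, mem_image, mem_filter, mem_Icc, Prod.mk.injEq]
    exact ⟨x2, hp.1.2.1, x3, ⟨hp.1.2.2, by omega, by omega⟩, hp.2.symm, rfl, rfl⟩
  have hfiber : ∀ x2, (#(fiber x2) : ℝ) ≤ 2 * √(2 * N) + 2 := fun x2 => by
    have := card_filter_mul_sq_mem_Icc_le ha3 I (a2 * x2 ^ 2 - N) (a2 * x2 ^ 2 + N)
    convert this using 4
    push_cast
    ring
  have hI : (#I : ℝ) = 2 * N + 1 := by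
    simp only [I, Int.card_Icc]
    norm_cast
    omega
  calc _ ≤ (#(I.biUnion fun x2 => (fiber x2).image
          fun x3 => (a2 * x2 ^ 2 - a3 * x3 ^ 2, x2, x3)) : ℝ) := by
        exact_mod_cast card_le_card hsub
    _ ≤ ∑ x2 ∈ I, (#(fiber x2) : ℝ) := by
        exact_mod_cast card_biUnion_le.trans (sum_le_sum fun _ _ => card_image_le)
    _ ≤ ∑ _x2 ∈ I, (2 * √(2 * N) + 2) := sum_le_sum fun x2 _ => hfiber x2
    _ = (2 * N + 1) * (2 * √(2 * N) + 2) := by rw [sum_const, nsmul_eq_mul, hI]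

lemma mul_two_mul_sqrt_add_two_le {x : ℝ} (hx : 1 ≤ x) :
    (2 * x + 1) * (2 * √(2 * x) + 2) ≤ 18 * x ^ ((3 : ℝ) / 2) := by
  have hsqrt : 1 ≤ √x := Real.one_le_sqrt.2 hx
  have hsqrt2 : √(2 * x) ≤ 2 * √x := by
    rw [Real.sqrt_mul zero_le_two]
    gcongr
    rw [Real.sqrt_le_left zero_le_two]
    norm_num
  have hpow : x ^ ((3 : ℝ) / 2) = x * √x := by
    rw [show (3 : ℝ) / 2 = 1 + 1 / 2 by norm_num, Real.rpow_add (by linarith), Real.rpow_one,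
      ← Real.sqrt_eq_rpow]
  rw [hpow]
  nlinarith

theorem stmt_3_general (a2 a3 : ℕ) (ha3 : 0 < a3) :
    ∃ C : ℝ, 0 < C ∧ ∀ N : ℕ, 1 ≤ N →
      (((Finset.Icc (-(N:ℤ)) N ×ˢ Finset.Icc (-(N:ℤ)) N ×ˢ Finset.Icc (-(N:ℤ)) N).filter
          (fun p : ℤ × ℤ × ℤ =>
            p.1 = (a2 : ℤ) * p.2.1 ^ 2 - (a3 : ℤ) * p.2.2 ^ 2)).card : ℝ) ≤
        C * (N : ℝ) ^ ((3 : ℝ) / 2) :=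
  ⟨18, by norm_num, fun N hN =>
    (card_paraboloid_le a2 a3 (by exact_mod_cast ha3) N).trans
      (mul_two_mul_sqrt_add_two_le (by exact_mod_cast hN))⟩

/-- For fixed positive integers a2, a3, the number of integer points on the
hyperbolic paraboloid x1 = a2·x2² - a3·x3² in the cube [-N,N]³ is O(N^(3/2)). -/
theorem stmt_3 (a2 a3 : ℕ) (ha2 : 0 < a2) (ha3 : 0 < a3) :
    ∃ C : ℝ, 0 < C ∧ ∀ N : ℕ, 1 ≤ N →
      (((Finset.Icc (-(N:ℤ)) N ×ˢ Finset.Icc (-(N:ℤ)) N ×ˢ Finset.Icc (-(N:ℤ)) N).filter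
          (fun p : ℤ × ℤ × ℤ =>
            p.1 = (a2 : ℤ) * p.2.1 ^ 2 - (a3 : ℤ) * p.2.2 ^ 2)).card : ℝ) ≤
        C * (N : ℝ) ^ ((3 : ℝ) / 2) :=
  stmt_3_general a2 a3 ha3
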